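/- arXiv:2001.06138 — 9 statements merged into one kernel-verified Lean document; each statement's English description precedes it below -/
import Mathlib

section
/- In the sequent calculus LJ for intuitionistic propositional logic (the restriction of LK to sequents whose right-hand side has length at most one), the sequent ⊢ (X ⇒ ff) ∨ X is not provable for a propositional variable X. -/
set_option autoImplicit true

/-- Formulas of intuitionistic propositional logic IL. -/
inductive ILF : Type
  | var : ℕ → ILF
  | top : ILF
  | ff : ILF
  | and : ILF → ILF → ILF
  | or : ILF → ILF → ILF
  | imp : ILF → ILF → ILF

/-- `LJ c Δ C` : the intuitionistic sequent `Δ ⊢ C` (the right-hand side has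
length at most one, encoded by `Option`) is provable in LJ, the restriction of
LK to intuitionistic sequents; the flag `c` permits Cut. -/
inductive LJ : Bool → List ILF → Option ILF → Prop
  | xl : LJ c (Δ ++ A :: A' :: Δ') C → LJ c (Δ ++ A' :: A :: Δ') C
  | wl : LJ c Δ C → LJ c (Δ ++ [A]) C
  | wr : LJ c Δ none → LJ c Δ (some B)
  | cl : LJ c (Δ ++ [A, A]) C → LJ c (Δ ++ [A]) C
  | id : LJ c [A] (some A)
  | cut : LJ true Δ (some B) → LJ true (Δ' ++ [B]) C → LJ true (Δ ++ Δ') C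
  | topL : LJ c Δ C → LJ c (Δ ++ [ILF.top]) C
  | topR : LJ c [] (some ILF.top)
  | ffL : LJ c [ILF.ff] none
  | ffR : LJ c Δ none → LJ c Δ (some ILF.ff)
  | andL₁ : LJ c (Δ ++ [A₁]) C → LJ c (Δ ++ [ILF.and A₁ A₂]) C
  | andL₂ : LJ c (Δ ++ [A₂]) C → LJ c (Δ ++ [ILF.and A₁ A₂]) C
  | andR : LJ c Δ (some B₁) → LJ c Δ (some B₂) → LJ c Δ (some (ILF.and B₁ B₂))
  | orL : LJ c (Δ ++ [A₁]) C → LJ c (Δ ++ [A₂]) C → LJ c (Δ ++ [ILF.or A₁ A₂]) C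
  | orR₁ : LJ c Δ (some B₁) → LJ c Δ (some (ILF.or B₁ B₂))
  | orR₂ : LJ c Δ (some B₂) → LJ c Δ (some (ILF.or B₁ B₂))
  | impL : LJ c Δ (some A) → LJ c (Δ ++ [B]) C → LJ c (Δ ++ [ILF.imp A B]) C
  | impR : LJ c (Δ ++ [A]) (some B) → LJ c Δ (some (ILF.imp A B))

/-- Kripke semantics over the two-world frame `false ≤ true`,
with every variable true exactly at world `true`. -/
def ILF.sem : ILF → Bool → Prop
  | .var _, w => w = true
  | .top, _ => True
  | .ff, _ => False
  | .and A B, w => A.sem w ∧ B.sem w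
  | .or A B, w => A.sem w ∨ B.sem w
  | .imp A B, w => ∀ w', w ≤ w' → A.sem w' → B.sem w'

def semO : Option ILF → Bool → Prop
  | none, _ => False
  | some B, w => B.sem w

theorem sem_mono (A : ILF) : ∀ w w' : Bool, w ≤ w' → A.sem w → A.sem w' := by
  induction A with
  | var n => intro w w' hle h; cases w <;> cases w' <;> simp_all [ILF.sem] <;> exact absurd hle (by decide)
  | top => intro _ _ _ _; trivial
  | ff => intro _ _ _ h; exact h
  | and A B ihA ihB => exact fun w w' hle h => ⟨ihA w w' hle h.1, ihB w w' hle h.2⟩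
  | or A B ihA ihB =>
      rintro w w' hle (h | h)
      · exact Or.inl (ihA w w' hle h)
      · exact Or.inr (ihB w w' hle h)
  | imp A B _ _ =>
      intro w w' hle h w'' hle' hA
      exact h w'' (le_trans hle hle') hA

theorem lj_sound {c Δ C} (h : LJ c Δ C) :
    ∀ w, (∀ A ∈ Δ, ILF.sem A w) → semO C w := by
  induction h with
  | xl _ ih =>
      intro w hw; apply ih; intro A hA; apply hw
      simp only [List.mem_append, List.mem_cons] at hA ⊢; tauto
  | wl _ ih =>
      intro w hw; apply ih; intro A hA; exact hw A (by simp [hA])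
  | wr _ ih => intro w hw; exact (ih w hw).elim
  | cl _ ih =>
      intro w hw; apply ih; intro A hA
      apply hw
      simp only [List.mem_append, List.mem_cons, List.not_mem_nil, or_false] at hA ⊢
      tauto
  | id => intro w hw; exact hw _ (by simp)
  | cut h1 h2 ih1 ih2 =>
      intro w hw
      apply ih2; intro A hA
      rcases List.mem_append.1 hA with h | h
      · exact hw A (by simp [h])
      · simp only [List.mem_singleton] at h; subst h
        exact ih1 w fun A hA => hw A (by simp [hA])
  | topL _ ih =>
      intro w hw; apply ih; intro A hA; exact hw A (by simp [hA])
  | topR => intro w _; trivial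
  | ffL => intro w hw; exact hw ILF.ff (by simp)
  | ffR _ ih => intro w hw; exact (ih w hw).elim
  | andL₁ _ ih =>
      intro w hw; apply ih; intro A hA
      rcases List.mem_append.1 hA with h | h
      · exact hw A (by simp [h])
      · simp only [List.mem_singleton] at h; subst h
        exact (hw _ (List.mem_append.2 (Or.inr (List.mem_singleton.2 rfl)))).1
  | andL₂ _ ih =>
      intro w hw; apply ih; intro A hA
      rcases List.mem_append.1 hA with h | h
      · exact hw A (by simp [h])
      · simp only [List.mem_singleton] at h; subst h
        exact (hw _ (List.mem_append.2 (Or.inr (List.mem_singleton.2 rfl)))).2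
  | andR _ _ ih1 ih2 => intro w hw; exact ⟨ih1 w hw, ih2 w hw⟩
  | orR₁ _ ih => intro w hw; exact Or.inl (ih w hw)
  | orR₂ _ ih => intro w hw; exact Or.inr (ih w hw)
  | orL _ _ ih1 ih2 =>
      intro w hw
      have hor := hw _ (List.mem_append.2 (Or.inr (List.mem_singleton.2 rfl)))
      rcases hor with h | h
      · apply ih1; intro A hA
        rcases List.mem_append.1 hA with h' | h'
        · exact hw A (by simp [h'])
        · simp only [List.mem_singleton] at h'; subst h'; exact h
      · apply ih2; intro A hA
        rcases List.mem_append.1 hA with h' | h'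
        · exact hw A (by simp [h'])
        · simp only [List.mem_singleton] at h'; subst h'; exact h
  | impL h1 _ ih1 ih2 =>
      intro w hw
      have himp := hw _ (List.mem_append.2 (Or.inr (List.mem_singleton.2 rfl)))
      have hA := ih1 w fun A hA => hw A (by simp [hA])
      have hB := himp w le_rfl hA
      apply ih2; intro A hA'
      rcases List.mem_append.1 hA' with h' | h'
      · exact hw A (by simp [h'])
      · simp only [List.mem_singleton] at h'; subst h'; exact hB
  | impR _ ih =>
      intro w hw
      intro w' hle hA
      apply ih
      intro A hA'
      rcases List.mem_append.1 hA' with h' | h'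
      · exact sem_mono A w w' hle (hw A h')
      · simp only [List.mem_singleton] at h'; subst h'; exact hA

/-- In LJ, the sequent `⊢ (X ⇒ ff) ∨ X` is not provable for a propositional
variable `X`. -/
theorem lj_no_excluded_middle (X : ℕ) :
    ¬ LJ true [] (some (ILF.or (ILF.imp (ILF.var X) ILF.ff) (ILF.var X))) := by
  intro h
  have := lj_sound h false (by simp)
  rcases this with h1 | h1
  · exact h1 true (by simp) rfl
  · simp [ILF.sem] at h1
end

section
/- Cut-elimination holds for LJ: if a sequent Δ ⊢ Γ (with |Γ| ≤ 1) has a formal proof in the intuitionistic sequent calculus LJ, then it has a proof in LJ that contains no application of the Cut rule. -/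
set_option autoImplicit true

/-!
Semantic cut-elimination, by normalisation by evaluation. Contexts ordered by inclusion form
a Kripke frame whose atoms are forced where they are cut-free provable, and compound formulas
are interpreted under the continuation modality `Cont`: `Cont P Γ` holds when, in every
extension `Γ'` of `Γ`, each goal that is cut-free provable wherever `P` holds above `Γ'` is
already cut-free provable from `Γ'`. Every LJ rule, Cut included, is sound for this
interpretation, whereas the cut-free rules alone suffice to show that hypotheses are forced
and to read a forced formula back as a cut-free proof. Evaluating a proof of `Δ ⊢ C` at the
world `Δ` and reading the result back gives a cut-free proof.
-/

namespace LJ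

variable {c : Bool}

theorem of_perm_append_left {Δ Δ' : List ILF} (h : Δ.Perm Δ') :
    ∀ {Θ : List ILF} {C : Option ILF}, LJ c (Θ ++ Δ) C → LJ c (Θ ++ Δ') C := by
  induction h with
  | nil => exact fun hd => hd
  | cons a _ ih =>
      intro Θ C hd
      simpa using ih (Θ := Θ ++ [a]) (by simpa using hd)
  | swap x y l => exact xl
  | trans _ _ ih₁ ih₂ => exact fun hd => ih₂ (ih₁ hd)

theorem of_perm {Δ Δ' : List ILF} {C : Option ILF} (h : Δ.Perm Δ') (hd : LJ c Δ C) :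
    LJ c Δ' C :=
  of_perm_append_left h (Θ := []) hd

theorem weaken_append {Δ : List ILF} {C : Option ILF} (hd : LJ c Δ C) (Θ : List ILF) :
    LJ c (Δ ++ Θ) C := by
  induction Θ using List.reverseRecOn with
  | nil => simpa using hd
  | append_singleton Θ A ih => simpa using wl (A := A) ih

theorem contract_of_mem {Δ : List ILF} {A : ILF} {C : Option ILF} (hA : A ∈ Δ)
    (hd : LJ c (Δ ++ [A]) C) : LJ c Δ C := by
  obtain ⟨s, t, rfl⟩ := List.append_of_mem hA
  have hperm : (s ++ A :: t ++ [A]).Perm (s ++ t ++ [A, A]) := by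
    simpa using List.Perm.append_left s (List.perm_middle (l₁ := t) (l₂ := [A])).symm
  have hback : (s ++ t ++ [A]).Perm (s ++ A :: t) := by
    simpa using List.Perm.append_left s (List.perm_append_comm (l₁ := t) (l₂ := [A]))
  exact of_perm hback (cl (of_perm hperm hd))

theorem contract_append_of_subset {Δ Θ : List ILF} {C : Option ILF} (hΘ : Θ ⊆ Δ)
    (hd : LJ c (Δ ++ Θ) C) : LJ c Δ C := by
  induction Θ using List.reverseRecOn with
  | nil => simpa using hd
  | append_singleton Θ A ih =>
      refine ih (fun x hx => hΘ (List.mem_append_left _ hx)) (contract_of_mem (A := A) ?_ ?_)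
      · exact List.mem_append_left _ (hΘ (by simp))
      · simpa using hd

theorem of_subset {Δ Δ' : List ILF} {C : Option ILF} (hd : LJ c Δ C) (h : Δ ⊆ Δ') :
    LJ c Δ' C :=
  contract_append_of_subset h (of_perm List.perm_append_comm (weaken_append hd Δ'))

theorem of_mem {Γ : List ILF} {A : ILF} (h : A ∈ Γ) : LJ c Γ (some A) :=
  of_subset id (by simpa using h)

theorem of_ff_mem {Γ : List ILF} {C : Option ILF} (h : ILF.ff ∈ Γ) : LJ c Γ C := by
  refine of_subset (Δ := [ILF.ff]) ?_ (by simpa using h)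
  cases C with
  | none => exact ffL
  | some B => exact wr ffL

def Cont (P : List ILF → Prop) (Γ : List ILF) : Prop :=
  ∀ Γ', Γ ⊆ Γ' → ∀ C,
    (∀ Γ'', Γ' ⊆ Γ'' → P Γ'' → LJ false Γ'' C) → LJ false Γ' C

namespace Cont

variable {P Q : List ILF → Prop} {Γ Γ' : List ILF}

theorem mono (h : Cont P Γ) (hs : Γ ⊆ Γ') : Cont P Γ' :=
  fun Γ'' hs' => h Γ'' (List.Subset.trans hs hs')

theorem pure (hP : ∀ {Γ Γ'}, Γ ⊆ Γ' → P Γ → P Γ') (h : P Γ) : Cont P Γ :=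
  fun _ hs _ k => k _ (List.Subset.refl _) (hP hs h)

theorem map (h : Cont P Γ) (f : ∀ {Γ'}, P Γ' → Q Γ') : Cont Q Γ :=
  fun Γ' hs C k => h Γ' hs C fun Γ'' hs' p => k Γ'' hs' (f p)

theorem bind (h : Cont P Γ) (f : ∀ Γ', Γ ⊆ Γ' → P Γ' → Cont Q Γ') : Cont Q Γ :=
  fun Γ₁ hs C k => h Γ₁ hs C fun Γ₂ hs₂ p =>
    f Γ₂ (List.Subset.trans hs hs₂) p Γ₂ (List.Subset.refl _) C fun Γ₃ hs₃ q =>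
      k Γ₃ (List.Subset.trans hs₂ hs₃) q

theorem elim {C : Option ILF} (h : Cont P Γ)
    (k : ∀ Γ', Γ ⊆ Γ' → P Γ' → LJ false Γ' C) : LJ false Γ C :=
  h Γ (List.Subset.refl _) C k

theorem elim_of_subset {C : Option ILF} (h : Cont P Γ') (hs : Γ ⊆ Γ')
    (k : ∀ Γ'', Γ ⊆ Γ'' → P Γ'' → LJ false Γ'' C) : LJ false Γ' C :=
  h.elim fun Γ'' hs' => k Γ'' (List.Subset.trans hs hs')

end Cont

def Forces : ILF → List ILF → Prop
  | .var n, Γ => LJ false Γ (some (.var n))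
  | .top, _ => True
  | .ff, _ => False
  | .and A B, Γ => Cont (Forces A) Γ ∧ Cont (Forces B) Γ
  | .or A B, Γ => Cont (Forces A) Γ ∨ Cont (Forces B) Γ
  | .imp A B, Γ => ∀ Γ', Γ ⊆ Γ' → Cont (Forces A) Γ' → Cont (Forces B) Γ'

def ForcesOpt : Option ILF → List ILF → Prop
  | none, _ => False
  | some B, Γ => Forces B Γ

theorem forces_mono : ∀ (A : ILF) {Γ Γ' : List ILF}, Γ ⊆ Γ' → Forces A Γ → Forces A Γ'
  | .var _, _, _, hs, h => of_subset h hs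
  | .top, _, _, _, _ => trivial
  | .ff, _, _, _, h => h
  | .and _ _, _, _, hs, h => ⟨h.1.mono hs, h.2.mono hs⟩
  | .or _ _, _, _, hs, h => h.imp (·.mono hs) (·.mono hs)
  | .imp _ _, _, _, hs, h => fun Γ₂ hs₂ => h Γ₂ (List.Subset.trans hs hs₂)

theorem Cont.of_forces {A : ILF} {Γ : List ILF} (h : Forces A Γ) : Cont (Forces A) Γ :=
  Cont.pure (forces_mono A) h

def ForcesCtx (Δ Γ : List ILF) : Prop := ∀ A ∈ Δ, Cont (Forces A) Γ

namespace ForcesCtx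

variable {Δ Δ' Γ Γ' : List ILF}

theorem mono (h : ForcesCtx Δ Γ) (hs : Γ ⊆ Γ') : ForcesCtx Δ Γ' :=
  fun A hA => (h A hA).mono hs

theorem left (h : ForcesCtx (Δ ++ Δ') Γ) : ForcesCtx Δ Γ :=
  fun A hA => h A (List.mem_append_left _ hA)

theorem right (h : ForcesCtx (Δ ++ Δ') Γ) : ForcesCtx Δ' Γ :=
  fun A hA => h A (List.mem_append_right _ hA)

theorem last {A : ILF} (h : ForcesCtx (Δ ++ [A]) Γ) : Cont (Forces A) Γ :=
  h A (by simp)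

theorem snoc {A : ILF} (h : ForcesCtx Δ Γ) (hA : Cont (Forces A) Γ) :
    ForcesCtx (Δ ++ [A]) Γ := by
  intro X hX
  rcases List.mem_append.1 hX with hX | hX
  · exact h X hX
  · rwa [List.mem_singleton.1 hX]

theorem of_perm (hp : Δ.Perm Δ') (h : ForcesCtx Δ Γ) : ForcesCtx Δ' Γ :=
  fun A hA => h A (hp.mem_iff.2 hA)

end ForcesCtx

def Valid (Δ : List ILF) (C : Option ILF) : Prop :=
  ∀ Γ, ForcesCtx Δ Γ → Cont (ForcesOpt C) Γ

theorem sound {Δ : List ILF} {C : Option ILF} (h : LJ c Δ C) : Valid Δ C := by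
  induction h with
  | xl _ ih => exact fun Γ hΓ => ih Γ (hΓ.of_perm (.append_left _ (.swap _ _ _)))
  | wl _ ih => exact fun Γ hΓ => ih Γ hΓ.left
  | wr _ ih => exact fun Γ hΓ => (ih Γ hΓ).map False.elim
  | cl _ ih => exact fun Γ hΓ => ih Γ (by simpa using hΓ.snoc hΓ.last)
  | id => exact fun Γ hΓ => hΓ _ (List.mem_singleton_self _)
  | cut _ _ ih₁ ih₂ => exact fun Γ hΓ => ih₂ Γ (hΓ.right.snoc (ih₁ Γ hΓ.left))
  | topL _ ih => exact fun Γ hΓ => ih Γ hΓ.left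
  | topR => exact fun _ _ => Cont.of_forces trivial
  | ffL => exact fun Γ hΓ => (hΓ _ (List.mem_singleton_self _)).map False.elim
  | ffR _ ih => exact fun Γ hΓ => (ih Γ hΓ).map False.elim
  | andL₁ _ ih =>
      exact fun Γ hΓ => hΓ.last.bind fun Γ' hs hAB => ih Γ' ((hΓ.left.mono hs).snoc hAB.1)
  | andL₂ _ ih =>
      exact fun Γ hΓ => hΓ.last.bind fun Γ' hs hAB => ih Γ' ((hΓ.left.mono hs).snoc hAB.2)
  | andR _ _ ih₁ ih₂ => exact fun Γ hΓ => Cont.of_forces ⟨ih₁ Γ hΓ, ih₂ Γ hΓ⟩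
  | orL _ _ ih₁ ih₂ =>
      refine fun Γ hΓ => hΓ.last.bind fun Γ' hs hAB => ?_
      rcases hAB with hA | hB
      · exact ih₁ Γ' ((hΓ.left.mono hs).snoc hA)
      · exact ih₂ Γ' ((hΓ.left.mono hs).snoc hB)
  | orR₁ _ ih => exact fun Γ hΓ => Cont.of_forces (.inl (ih Γ hΓ))
  | orR₂ _ ih => exact fun Γ hΓ => Cont.of_forces (.inr (ih Γ hΓ))
  | impL _ _ ih₁ ih₂ =>
      refine fun Γ hΓ => hΓ.last.bind fun Γ' hs hAB => ?_
      have hΓ' := hΓ.left.mono hs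
      exact ih₂ Γ' (hΓ'.snoc (hAB Γ' (List.Subset.refl _) (ih₁ Γ' hΓ')))
  | impR _ ih => exact fun Γ hΓ => Cont.of_forces fun Γ' hs hA => ih Γ' ((hΓ.mono hs).snoc hA)

def Reifies (A : ILF) : Prop := ∀ Γ, Forces A Γ → LJ false Γ (some A)

def Reflects (A : ILF) : Prop := ∀ Γ, A ∈ Γ → Cont (Forces A) Γ

theorem Reifies.cont {A : ILF} (hA : Reifies A) {Γ : List ILF} (h : Cont (Forces A) Γ) :
    LJ false Γ (some A) :=
  h.elim fun Γ' _ => hA Γ'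

theorem Reflects.snoc {A : ILF} (hA : Reflects A) (Γ : List ILF) : Cont (Forces A) (Γ ++ [A]) :=
  hA _ (by simp)

theorem reifies_var (n : ℕ) : Reifies (.var n) := fun _ h => h

theorem reflects_var (n : ℕ) : Reflects (.var n) := fun _ h => Cont.of_forces (of_mem h)

theorem reifies_top : Reifies .top := fun Γ _ => of_subset topR (List.nil_subset Γ)

theorem reflects_top : Reflects .top := fun _ _ => Cont.of_forces trivial

theorem reifies_ff : Reifies .ff := fun _ h => h.elim

theorem reflects_ff : Reflects .ff := fun _ hm _ hs _ _ => of_ff_mem (hs hm)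

theorem reifies_and {A B : ILF} (hA : Reifies A) (hB : Reifies B) : Reifies (.and A B) :=
  fun _ h => andR (hA.cont h.1) (hB.cont h.2)

theorem reflects_and {A B : ILF} (hA : Reflects A) (hB : Reflects B) : Reflects (.and A B) :=
  fun _ hm => Cont.of_forces
    ⟨fun Γ' hs _ k => contract_of_mem (hs hm) <|
        andL₁ ((hA.snoc Γ').elim_of_subset (List.subset_append_left _ _) k),
     fun Γ' hs _ k => contract_of_mem (hs hm) <|
        andL₂ ((hB.snoc Γ').elim_of_subset (List.subset_append_left _ _) k)⟩

theorem reifies_or {A B : ILF} (hA : Reifies A) (hB : Reifies B) : Reifies (.or A B) :=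
  fun _ h => h.elim (fun h => orR₁ (hA.cont h)) (fun h => orR₂ (hB.cont h))

theorem reflects_or {A B : ILF} (hA : Reflects A) (hB : Reflects B) : Reflects (.or A B) :=
  fun _ hm Γ' hs _ k => contract_of_mem (hs hm) <| orL
    (((hA.snoc Γ').map fun h => .inl (.of_forces h)).elim_of_subset
      (List.subset_append_left _ _) k)
    (((hB.snoc Γ').map fun h => .inr (.of_forces h)).elim_of_subset
      (List.subset_append_left _ _) k)

theorem reifies_imp {A B : ILF} (hA : Reflects A) (hB : Reifies B) : Reifies (.imp A B) :=
  fun Γ h => impR (hB.cont (h _ (List.subset_append_left _ _) (hA.snoc Γ)))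

theorem reflects_imp {A B : ILF} (hA : Reifies A) (hB : Reflects B) : Reflects (.imp A B) :=
  fun _ hm => Cont.of_forces fun _ hs₁ hA' Γ' hs₂ _ k => contract_of_mem (hs₂ (hs₁ hm)) <|
    impL (hA.cont (hA'.mono hs₂)) ((hB.snoc Γ').elim_of_subset (List.subset_append_left _ _) k)

-- Mutual, because implication is contravariant in its premise.
theorem reifies_and_reflects (A : ILF) : Reifies A ∧ Reflects A := by
  induction A with
  | var n => exact ⟨reifies_var n, reflects_var n⟩
  | top => exact ⟨reifies_top, reflects_top⟩
  | ff => exact ⟨reifies_ff, reflects_ff⟩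
  | and A B ihA ihB => exact ⟨reifies_and ihA.1 ihB.1, reflects_and ihA.2 ihB.2⟩
  | or A B ihA ihB => exact ⟨reifies_or ihA.1 ihB.1, reflects_or ihA.2 ihB.2⟩
  | imp A B ihA ihB => exact ⟨reifies_imp ihA.2 ihB.1, reflects_imp ihA.1 ihB.2⟩

theorem reifies (A : ILF) : Reifies A := (reifies_and_reflects A).1

theorem reflects (A : ILF) : Reflects A := (reifies_and_reflects A).2

theorem reifies_opt : ∀ {C : Option ILF} {Γ : List ILF}, ForcesOpt C Γ → LJ false Γ C
  | none, _, h => h.elim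
  | some B, Γ, h => reifies B Γ h

end LJ

/-- Cut-elimination for LJ: every sequent `Δ ⊢ Γ` (with `|Γ| ≤ 1`, encoded by
an `Option` on the right) provable in LJ has a cut-free proof in LJ. -/
theorem lj_cut_elimination (Δ : List ILF) (C : Option ILF) :
    LJ true Δ C → LJ false Δ C := by
  intro h
  exact (LJ.sound h Δ fun A => LJ.reflects A Δ).elim fun _ _ => LJ.reifies_opt
end

section
/- In the sequent calculus ILC_ι (ILC augmented with the weakly distributive rules), the sequent !?A ⊢ ?!A is provable for every formula A; in fact it has two distinct proofs, one using only the rule !?L together with !R, ?D, !D and Id, and another using only the rule ?!R together with ?L, ?D, !D and Id. -/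
set_option autoImplicit true

/-- Formulas of intuitionistic linear logic extended (ILL^e). -/
inductive LF : Type
  | var : ℕ → LF
  | top : LF
  | bot : LF
  | one : LF
  | zero : LF
  | tensor : LF → LF → LF
  | par : LF → LF → LF
  | withc : LF → LF → LF
  | plus : LF → LF → LF
  | neg : LF → LF
  | ofc : LF → LF
  | wn : LF → LF

/-- `ILC c w Δ Γ` : the sequent `Δ ⊢ Γ` is provable, where the flag `c`
permits the Cut rule and the flag `w` permits the two weakly distributive
rules.  Thus `ILC true false` is provability in ILC and `ILC true true` is
provability in ILC_ι. -/
inductive ILC : Bool → Bool → List LF → List LF → Prop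
  | xl : ILC c w (Δ ++ A :: A' :: Δ') Γ → ILC c w (Δ ++ A' :: A :: Δ') Γ
  | xr : ILC c w Δ (Γ ++ B :: B' :: Γ') → ILC c w Δ (Γ ++ B' :: B :: Γ')
  | ocW : ILC c w Δ Γ → ILC c w (Δ ++ [LF.ofc A]) Γ
  | wnW : ILC c w Δ Γ → ILC c w Δ (LF.wn B :: Γ)
  | ocC : ILC c w (Δ ++ [LF.ofc A, LF.ofc A]) Γ → ILC c w (Δ ++ [LF.ofc A]) Γ
  | wnC : ILC c w Δ (LF.wn B :: LF.wn B :: Γ) → ILC c w Δ (LF.wn B :: Γ)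
  | ocD : ILC c w (Δ ++ [A]) Γ → ILC c w (Δ ++ [LF.ofc A]) Γ
  | wnD : ILC c w Δ (B :: Γ) → ILC c w Δ (LF.wn B :: Γ)
  | wnL : ILC c w (List.map LF.ofc Δ ++ [A]) (List.map LF.wn Γ) →
      ILC c w (List.map LF.ofc Δ ++ [LF.wn A]) (List.map LF.wn Γ)
  | ocR : ILC c w (List.map LF.ofc Δ) (B :: List.map LF.wn Γ) →
      ILC c w (List.map LF.ofc Δ) (LF.ofc B :: List.map LF.wn Γ)
  | id : ILC c w [A] [A]
  | cut : ILC true w Δ (B :: Γ) → ILC true w (Δ' ++ [B]) Γ' →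
      ILC true w (Δ ++ Δ') (Γ ++ Γ')
  | oneR : ILC c w Δ (LF.one :: Γ)
  | zeroL : ILC c w (Δ ++ [LF.zero]) Γ
  | topL : ILC c w Δ Γ → ILC c w (Δ ++ [LF.top]) Γ
  | topR : ILC c w [] [LF.top]
  | botL : ILC c w [LF.bot] []
  | botR : ILC c w Δ Γ → ILC c w Δ (LF.bot :: Γ)
  | tensorL : ILC c w (Δ ++ [A₁, A₂]) Γ → ILC c w (Δ ++ [LF.tensor A₁ A₂]) Γ
  | tensorR : ILC c w Δ₁ (B₁ :: Γ₁) → ILC c w Δ₂ (B₂ :: Γ₂) →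
      ILC c w (Δ₁ ++ Δ₂) (LF.tensor B₁ B₂ :: (Γ₁ ++ Γ₂))
  | withL₁ : ILC c w (Δ ++ [A₁]) Γ → ILC c w (Δ ++ [LF.withc A₁ A₂]) Γ
  | withL₂ : ILC c w (Δ ++ [A₂]) Γ → ILC c w (Δ ++ [LF.withc A₁ A₂]) Γ
  | withR : ILC c w Δ (B₁ :: Γ) → ILC c w Δ (B₂ :: Γ) → ILC c w Δ (LF.withc B₁ B₂ :: Γ)
  | parL : ILC c w (Δ₁ ++ [A₁]) Γ₁ → ILC c w (Δ₂ ++ [A₂]) Γ₂ →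
      ILC c w (Δ₁ ++ Δ₂ ++ [LF.par A₁ A₂]) (Γ₁ ++ Γ₂)
  | parR : ILC c w Δ (B₁ :: B₂ :: Γ) → ILC c w Δ (LF.par B₁ B₂ :: Γ)
  | plusL : ILC c w (Δ ++ [A₁]) Γ → ILC c w (Δ ++ [A₂]) Γ → ILC c w (Δ ++ [LF.plus A₁ A₂]) Γ
  | plusR₁ : ILC c w Δ (B₁ :: Γ) → ILC c w Δ (LF.plus B₁ B₂ :: Γ)
  | plusR₂ : ILC c w Δ (B₂ :: Γ) → ILC c w Δ (LF.plus B₁ B₂ :: Γ)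
  | negL : ILC c w Δ (B :: Γ) → ILC c w (Δ ++ [LF.neg B]) Γ
  | negR : ILC c w (Δ ++ [A]) Γ → ILC c w Δ (LF.neg A :: Γ)
  | ocwnL : ILC c true (List.map LF.ofc Δ ++ [LF.ofc A]) (List.map LF.wn Γ) →
      ILC c true (List.map LF.ofc Δ ++ [LF.ofc (LF.wn A)]) (List.map LF.wn Γ)
  | wnocR : ILC c true (List.map LF.ofc Δ) (LF.wn B :: List.map LF.wn Γ) →
      ILC c true (List.map LF.ofc Δ) (LF.wn (LF.ofc B) :: List.map LF.wn Γ)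

/-- The fragment of ILC_ι consisting only of the rules Id, !D, ?D, !R and the
weakly distributive rule !?L. -/
inductive FragA : List LF → List LF → Prop
  | id : FragA [A] [A]
  | ocD : FragA (Δ ++ [A]) Γ → FragA (Δ ++ [LF.ofc A]) Γ
  | wnD : FragA Δ (B :: Γ) → FragA Δ (LF.wn B :: Γ)
  | ocR : FragA (List.map LF.ofc Δ) (B :: List.map LF.wn Γ) →
      FragA (List.map LF.ofc Δ) (LF.ofc B :: List.map LF.wn Γ)
  | ocwnL : FragA (List.map LF.ofc Δ ++ [LF.ofc A]) (List.map LF.wn Γ) →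
      FragA (List.map LF.ofc Δ ++ [LF.ofc (LF.wn A)]) (List.map LF.wn Γ)

/-- The fragment of ILC_ι consisting only of the rules Id, !D, ?D, ?L and the
weakly distributive rule ?!R. -/
inductive FragB : List LF → List LF → Prop
  | id : FragB [A] [A]
  | ocD : FragB (Δ ++ [A]) Γ → FragB (Δ ++ [LF.ofc A]) Γ
  | wnD : FragB Δ (B :: Γ) → FragB Δ (LF.wn B :: Γ)
  | wnL : FragB (List.map LF.ofc Δ ++ [A]) (List.map LF.wn Γ) →
      FragB (List.map LF.ofc Δ ++ [LF.wn A]) (List.map LF.wn Γ)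
  | wnocR : FragB (List.map LF.ofc Δ) (LF.wn B :: List.map LF.wn Γ) →
      FragB (List.map LF.ofc Δ) (LF.wn (LF.ofc B) :: List.map LF.wn Γ)

/-- In ILC_ι, the sequent `!?A ⊢ ?!A` is provable for every formula `A`;
moreover it has a proof using only !?L together with !R, ?D, !D, Id, and
another proof using only ?!R together with ?L, ?D, !D, Id. -/
theorem ilc_iota_dist (A : LF) :
    ILC true true [LF.ofc (LF.wn A)] [LF.wn (LF.ofc A)] ∧
    FragA [LF.ofc (LF.wn A)] [LF.wn (LF.ofc A)] ∧
    FragB [LF.ofc (LF.wn A)] [LF.wn (LF.ofc A)] := by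
  refine ⟨?_, ?_, ?_⟩
  · have h : ILC true true (List.map LF.ofc [] ++ [LF.ofc (LF.wn A)])
        (List.map LF.wn [LF.ofc A]) :=
      ILC.ocwnL (Δ := []) (Γ := [LF.ofc A]) (ILC.wnD (ILC.id))
    simpa using h
  · have h : FragA (List.map LF.ofc [] ++ [LF.ofc (LF.wn A)])
        (List.map LF.wn [LF.ofc A]) :=
      FragA.ocwnL (Δ := []) (Γ := [LF.ofc A]) (FragA.wnD (FragA.id))
    simpa using h
  · have h1 : FragB ([] ++ [LF.wn A]) [LF.wn A] := by
      have := FragB.wnL (Δ := []) (Γ := [A]) (A := A)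
        (by simpa using (FragB.wnD (FragB.id (A := A))))
      simpa using this
    have h2 : FragB ([] ++ [LF.ofc (LF.wn A)]) [LF.wn A] := FragB.ocD h1
    have h3 : FragB (List.map LF.ofc [LF.wn A]) (LF.wn (LF.ofc A) :: List.map LF.wn []) :=
      FragB.wnocR (Δ := [LF.wn A]) (Γ := []) (B := A) (by simpa using h2)
    simpa using h3
end

section
/- The sequent !?X ⊢ ?!X, for a propositional variable X, is not provable in the sequent calculus ILC (without the weakly distributive rules); hence ILC_ι is strictly stronger than ILC. -/
set_option autoImplicit true

/-! ### A finite phase-space countermodel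

We interpret formulas in the 3-element algebra of facts of a phase space:
the commutative monoid `{0,1,2}` with unit `0`, `1·1 = 1·2 = 2·2 = 1`, and
pole `{1}`.  Its facts are `{0,1,2}, {1}, {1,2}`, numbered `0, 1, 2`.
All rules of ILC (including Cut, but excluding the weakly distributive
rules) are sound for this interpretation, but `!?X ⊢ ?!X` is not valid. -/

namespace IlcModel

/-- tensor of facts -/
def tV : Fin 3 → Fin 3 → Fin 3 := ![![0,1,2],![1,1,1],![2,1,1]]
/-- par of facts -/
def pV : Fin 3 → Fin 3 → Fin 3 := ![![0,0,0],![0,1,2],![0,2,0]]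
/-- plus of facts -/
def plV : Fin 3 → Fin 3 → Fin 3 := ![![0,0,0],![0,1,2],![0,2,2]]
/-- with of facts -/
def wV : Fin 3 → Fin 3 → Fin 3 := ![![0,1,2],![1,1,1],![2,1,2]]
/-- linear negation of facts -/
def ngV : Fin 3 → Fin 3 := ![1,0,2]
/-- of-course of facts -/
def bgV : Fin 3 → Fin 3 := ![0,1,1]
/-- why-not of facts -/
def wnV : Fin 3 → Fin 3 := ![0,1,0]
/-- inclusion order of facts -/
def leV : Fin 3 → Fin 3 → Bool := ![![true,false,false],![true,true,true],![true,false,true]]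

/-- Interpretation of formulas (every variable is sent to the fact `2`). -/
def ev : LF → Fin 3
  | LF.var _ => 2
  | LF.top => 0
  | LF.bot => 1
  | LF.one => 0
  | LF.zero => 1
  | LF.tensor A B => tV (ev A) (ev B)
  | LF.par A B => pV (ev A) (ev B)
  | LF.withc A B => wV (ev A) (ev B)
  | LF.plus A B => plV (ev A) (ev B)
  | LF.neg A => ngV (ev A)
  | LF.ofc A => bgV (ev A)
  | LF.wn A => wnV (ev A)

/-- Interpretation of a left context (iterated tensor). -/
def tL : List LF → Fin 3
  | [] => 0
  | A :: Δ => tV (ev A) (tL Δ)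

/-- Interpretation of a right context (iterated par). -/
def pL : List LF → Fin 3
  | [] => 1
  | B :: Γ => pV (ev B) (pL Γ)

@[simp] theorem tL_nil : tL [] = 0 := rfl
@[simp] theorem tL_cons {A Δ} : tL (A :: Δ) = tV (ev A) (tL Δ) := rfl
@[simp] theorem pL_nil : pL [] = 1 := rfl
@[simp] theorem pL_cons {B Γ} : pL (B :: Γ) = pV (ev B) (pL Γ) := rfl

theorem tV_assoc : ∀ a b c, tV (tV a b) c = tV a (tV b c) := by decide
theorem tV_one : ∀ a, tV 0 a = a := by decide
theorem pV_assoc : ∀ a b c, pV (pV a b) c = pV a (pV b c) := by decide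
theorem pV_bot : ∀ a, pV 1 a = a := by decide

@[simp] theorem tL_app : ∀ Δ Δ', tL (Δ ++ Δ') = tV (tL Δ) (tL Δ')
  | [], Δ' => (tV_one _).symm
  | A :: Δ, Δ' => by simp [tL, tL_app Δ Δ', tV_assoc]

@[simp] theorem pL_app : ∀ Γ Γ', pL (Γ ++ Γ') = pV (pL Γ) (pL Γ')
  | [], Γ' => (pV_bot _).symm
  | B :: Γ, Γ' => by simp [pL, pL_app Γ Γ', pV_assoc]

/-- Left contexts of `!`-formulas denote `!`-fixed facts. -/
theorem bg_tL : ∀ Δ : List LF, bgV (tL (List.map LF.ofc Δ)) = tL (List.map LF.ofc Δ)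
  | [] => by decide
  | A :: Δ => by
    have h := bg_tL Δ
    have key : ∀ x y, bgV y = y → bgV (tV (bgV x) y) = tV (bgV x) y := by decide
    simpa [tL, ev] using key (ev A) _ h

/-- Right contexts of `?`-formulas denote `?`-fixed facts. -/
theorem wn_pL : ∀ Γ : List LF, wnV (pL (List.map LF.wn Γ)) = pL (List.map LF.wn Γ)
  | [] => by decide
  | B :: Γ => by
    have h := wn_pL Γ
    have key : ∀ x y, wnV y = y → wnV (pV (wnV x) y) = pV (wnV x) y := by decide
    simpa [pL, ev] using key (ev B) _ h

/-- Soundness of ILC (without the weakly distributive rules) for the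
countermodel: a provable sequent `Δ ⊢ Γ` satisfies `⟦Δ⟧ ≤ ⟦Γ⟧`. -/
theorem sound : ∀ {c w : Bool} {Δ Γ : List LF}, ILC c w Δ Γ → w = false →
    leV (tL Δ) (pL Γ) = true := by
  intro c w Δ Γ h
  induction h with
  | xl _ ih =>
    intro hw; have H := ih hw; simp only [tL_app, tL_cons] at H ⊢
    exact (by decide : ∀ d a a' d' g,
      leV (tV d (tV a (tV a' d'))) g = true →
      leV (tV d (tV a' (tV a d'))) g = true) _ _ _ _ _ H
  | xr _ ih =>
    intro hw; have H := ih hw; simp only [pL_app, pL_cons] at H ⊢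
    exact (by decide : ∀ d b b' g' g,
      leV d (pV g (pV b (pV b' g'))) = true →
      leV d (pV g (pV b' (pV b g'))) = true) _ _ _ _ _ H
  | ocW _ ih =>
    intro hw; have H := ih hw; simp only [tL_app, tL_cons, tL_nil, ev]
    exact (by decide : ∀ d a g, leV d g = true →
      leV (tV d (tV (bgV a) 0)) g = true) _ _ _ H
  | wnW _ ih =>
    intro hw; have H := ih hw; simp only [pL_cons, ev]
    exact (by decide : ∀ d b g, leV d g = true →
      leV d (pV (wnV b) g) = true) _ _ _ H
  | ocC _ ih =>
    intro hw; have H := ih hw; simp only [tL_app, tL_cons, tL_nil, ev] at H ⊢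
    exact (by decide : ∀ d a g,
      leV (tV d (tV (bgV a) (tV (bgV a) 0))) g = true →
      leV (tV d (tV (bgV a) 0)) g = true) _ _ _ H
  | wnC _ ih =>
    intro hw; have H := ih hw; simp only [pL_cons, ev] at H ⊢
    exact (by decide : ∀ d b g,
      leV d (pV (wnV b) (pV (wnV b) g)) = true →
      leV d (pV (wnV b) g) = true) _ _ _ H
  | ocD _ ih =>
    intro hw; have H := ih hw; simp only [tL_app, tL_cons, tL_nil, ev] at H ⊢
    exact (by decide : ∀ d a g, leV (tV d (tV a 0)) g = true →
      leV (tV d (tV (bgV a) 0)) g = true) _ _ _ H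
  | wnD _ ih =>
    intro hw; have H := ih hw; simp only [pL_cons, ev] at H ⊢
    exact (by decide : ∀ d b g, leV d (pV b g) = true →
      leV d (pV (wnV b) g) = true) _ _ _ H
  | @wnL c w Δ A Γ _ ih =>
    intro hw; have H := ih hw
    simp only [tL_app, tL_cons, tL_nil, ev] at H ⊢
    exact (by decide : ∀ z a g, bgV z = z → wnV g = g →
      leV (tV z (tV a 0)) g = true →
      leV (tV z (tV (wnV a) 0)) g = true) _ _ _ (bg_tL Δ) (wn_pL Γ) H
  | @ocR c w Δ B Γ _ ih =>
    intro hw; have H := ih hw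
    simp only [pL_cons, ev] at H ⊢
    exact (by decide : ∀ z b g, bgV z = z → wnV g = g →
      leV z (pV b g) = true →
      leV z (pV (bgV b) g) = true) _ _ _ (bg_tL Δ) (wn_pL Γ) H
  | id =>
    intro _; simp only [tL_cons, tL_nil, pL_cons, pL_nil]
    exact (by decide : ∀ a, leV (tV a 0) (pV a 1) = true) _
  | cut _ _ ih1 ih2 =>
    intro hw; have H1 := ih1 hw; have H2 := ih2 hw
    simp only [tL_app, tL_cons, tL_nil, pL_app, pL_cons, pL_nil] at H1 H2 ⊢
    exact (by decide : ∀ d b g d' g',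
      leV d (pV b g) = true → leV (tV d' (tV b 0)) g' = true →
      leV (tV d d') (pV g g') = true) _ _ _ _ _ H1 H2
  | oneR =>
    intro _; simp only [pL_cons, ev]
    exact (by decide : ∀ d g, leV d (pV 0 g) = true) _ _
  | zeroL =>
    intro _; simp only [tL_app, tL_cons, tL_nil, ev]
    exact (by decide : ∀ d g, leV (tV d (tV 1 0)) g = true) _ _
  | topL _ ih =>
    intro hw; have H := ih hw; simp only [tL_app, tL_cons, tL_nil, ev]
    exact (by decide : ∀ d g, leV d g = true →
      leV (tV d (tV 0 0)) g = true) _ _ H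
  | topR => intro _; decide
  | botL => intro _; decide
  | botR _ ih =>
    intro hw; have H := ih hw; simp only [pL_cons, ev]
    exact (by decide : ∀ d g, leV d g = true → leV d (pV 1 g) = true) _ _ H
  | tensorL _ ih =>
    intro hw; have H := ih hw
    simp only [tL_app, tL_cons, tL_nil, ev] at H ⊢
    exact (by decide : ∀ d a b g,
      leV (tV d (tV a (tV b 0))) g = true →
      leV (tV d (tV (tV a b) 0)) g = true) _ _ _ _ H
  | tensorR _ _ ih1 ih2 =>
    intro hw; have H1 := ih1 hw; have H2 := ih2 hw
    simp only [tL_app, pL_app, pL_cons, ev] at H1 H2 ⊢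
    exact (by decide : ∀ d1 b1 g1 d2 b2 g2,
      leV d1 (pV b1 g1) = true → leV d2 (pV b2 g2) = true →
      leV (tV d1 d2) (pV (tV b1 b2) (pV g1 g2)) = true) _ _ _ _ _ _ H1 H2
  | withL₁ _ ih =>
    intro hw; have H := ih hw
    simp only [tL_app, tL_cons, tL_nil, ev] at H ⊢
    exact (by decide : ∀ d a b g, leV (tV d (tV a 0)) g = true →
      leV (tV d (tV (wV a b) 0)) g = true) _ _ _ _ H
  | withL₂ _ ih =>
    intro hw; have H := ih hw
    simp only [tL_app, tL_cons, tL_nil, ev] at H ⊢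
    exact (by decide : ∀ d a b g, leV (tV d (tV b 0)) g = true →
      leV (tV d (tV (wV a b) 0)) g = true) _ _ _ _ H
  | withR _ _ ih1 ih2 =>
    intro hw; have H1 := ih1 hw; have H2 := ih2 hw
    simp only [pL_cons, ev] at H1 H2 ⊢
    exact (by decide : ∀ d a b g,
      leV d (pV a g) = true → leV d (pV b g) = true →
      leV d (pV (wV a b) g) = true) _ _ _ _ H1 H2
  | parL _ _ ih1 ih2 =>
    intro hw; have H1 := ih1 hw; have H2 := ih2 hw
    simp only [tL_app, tL_cons, tL_nil, pL_app, ev] at H1 H2 ⊢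
    exact (by decide : ∀ d1 a1 g1 d2 a2 g2,
      leV (tV d1 (tV a1 0)) g1 = true → leV (tV d2 (tV a2 0)) g2 = true →
      leV (tV (tV d1 d2) (tV (pV a1 a2) 0)) (pV g1 g2) = true) _ _ _ _ _ _ H1 H2
  | parR _ ih =>
    intro hw; have H := ih hw
    simp only [pL_cons, ev] at H ⊢
    exact (by decide : ∀ d a b g, leV d (pV a (pV b g)) = true →
      leV d (pV (pV a b) g) = true) _ _ _ _ H
  | plusL _ _ ih1 ih2 =>
    intro hw; have H1 := ih1 hw; have H2 := ih2 hw
    simp only [tL_app, tL_cons, tL_nil, ev] at H1 H2 ⊢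
    exact (by decide : ∀ d a b g,
      leV (tV d (tV a 0)) g = true → leV (tV d (tV b 0)) g = true →
      leV (tV d (tV (plV a b) 0)) g = true) _ _ _ _ H1 H2
  | plusR₁ _ ih =>
    intro hw; have H := ih hw
    simp only [pL_cons, ev] at H ⊢
    exact (by decide : ∀ d a b g, leV d (pV a g) = true →
      leV d (pV (plV a b) g) = true) _ _ _ _ H
  | plusR₂ _ ih =>
    intro hw; have H := ih hw
    simp only [pL_cons, ev] at H ⊢
    exact (by decide : ∀ d a b g, leV d (pV b g) = true →
      leV d (pV (plV a b) g) = true) _ _ _ _ H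
  | negL _ ih =>
    intro hw; have H := ih hw
    simp only [tL_app, tL_cons, tL_nil, pL_cons, ev] at H ⊢
    exact (by decide : ∀ d b g, leV d (pV b g) = true →
      leV (tV d (tV (ngV b) 0)) g = true) _ _ _ H
  | negR _ ih =>
    intro hw; have H := ih hw
    simp only [tL_app, tL_cons, tL_nil, pL_cons, ev] at H ⊢
    exact (by decide : ∀ d a g, leV (tV d (tV a 0)) g = true →
      leV d (pV (ngV a) g) = true) _ _ _ H
  | ocwnL _ _ => intro hw; exact absurd hw (by decide)
  | wnocR _ _ => intro hw; exact absurd hw (by decide)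

end IlcModel

/-- The sequent `!?X ⊢ ?!X` (for a propositional variable `X`) is not provable
in ILC (without the weakly distributive rules), while it is provable in
ILC_ι; hence ILC_ι is strictly stronger than ILC. -/
theorem ilc_iota_strictly_stronger (X : ℕ) :
    (¬ ILC true false [LF.ofc (LF.wn (LF.var X))] [LF.wn (LF.ofc (LF.var X))]) ∧
    ILC true true [LF.ofc (LF.wn (LF.var X))] [LF.wn (LF.ofc (LF.var X))] := by
  constructor
  · intro h
    have H := IlcModel.sound h rfl
    simp only [IlcModel.tL_cons, IlcModel.tL_nil, IlcModel.pL_cons, IlcModel.pL_nil,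
      IlcModel.ev] at H
    exact absurd H (by decide)
  · have h1 : ILC true true [LF.wn (LF.var X)] [LF.wn (LF.var X)] := ILC.id
    have h2 : ILC true true [LF.ofc (LF.wn (LF.var X))] [LF.wn (LF.var X)] :=
      ILC.ocD (Δ := []) h1
    exact ILC.wnocR (Δ := [LF.wn (LF.var X)]) (Γ := []) h2
end

section
/- In the sequent calculus ILC_ι, the sequent !(X ⅋ X) ⊢ ?(X ⊗ X) is provable for a propositional variable X. -/
set_option autoImplicit true

/-- In ILC_ι, the sequent `!(X ⅋ X) ⊢ ?(X ⊗ X)` is provable for a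
propositional variable `X`. -/
theorem ilc_iota_par_tensor (X : ℕ) :
    ILC true true [LF.ofc (LF.par (LF.var X) (LF.var X))]
      [LF.wn (LF.tensor (LF.var X) (LF.var X))] := by
  set V := LF.var X with hV
  set P := LF.par V V with hP
  set T := LF.tensor V V with hT
  -- G : [?!V] ⊢ [?T]
  have t2 : ILC true true [V, V] [T] :=
    ILC.tensorR (Δ₁ := [V]) (Δ₂ := [V]) (Γ₁ := []) (Γ₂ := []) ILC.id ILC.id
  have t3 : ILC true true [V, V] [LF.wn T] := ILC.wnD t2
  have t4 : ILC true true [V, LF.ofc V] [LF.wn T] := ILC.ocD (Δ := [V]) t3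
  have t5 : ILC true true [LF.ofc V, V] [LF.wn T] := ILC.xl (Δ := []) t4
  have t6 : ILC true true [LF.ofc V, LF.ofc V] [LF.wn T] := ILC.ocD (Δ := [LF.ofc V]) t5
  have t7 : ILC true true [LF.ofc V] [LF.wn T] := ILC.ocC (Δ := []) t6
  have G : ILC true true [LF.wn (LF.ofc V)] [LF.wn T] :=
    ILC.wnL (Δ := []) (A := LF.ofc V) (Γ := [T]) t7
  -- F : [!P] ⊢ [?!V, ?!V]
  have h1 : ILC true true [P] [V, V] :=
    ILC.parL (Δ₁ := []) (Δ₂ := []) (Γ₁ := [V]) (Γ₂ := [V]) ILC.id ILC.id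
  have h2 : ILC true true [P] [LF.wn V, V] := ILC.wnD h1
  have h3 : ILC true true [P] [V, LF.wn V] := ILC.xr (Γ := []) h2
  have h4 : ILC true true [P] [LF.wn V, LF.wn V] := ILC.wnD h3
  have h5 : ILC true true [LF.ofc P] [LF.wn V, LF.wn V] := ILC.ocD (Δ := []) h4
  have h6 : ILC true true [LF.ofc P] [LF.wn (LF.ofc V), LF.wn V] :=
    ILC.wnocR (Δ := [P]) (B := V) (Γ := [V]) h5
  have h7 : ILC true true [LF.ofc P] [LF.wn V, LF.wn (LF.ofc V)] := ILC.xr (Γ := []) h6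
  have h8 : ILC true true [LF.ofc P] [LF.wn (LF.ofc V), LF.wn (LF.ofc V)] :=
    ILC.wnocR (Δ := [P]) (B := V) (Γ := [LF.ofc V]) h7
  -- cuts
  have c1 : ILC true true [LF.ofc P] [LF.wn (LF.ofc V), LF.wn T] :=
    ILC.cut (Δ := [LF.ofc P]) (Γ := [LF.wn (LF.ofc V)]) (Δ' := []) (Γ' := [LF.wn T]) h8 G
  have c2 : ILC true true [LF.ofc P] [LF.wn T, LF.wn T] :=
    ILC.cut (Δ := [LF.ofc P]) (Γ := [LF.wn T]) (Δ' := []) (Γ' := [LF.wn T]) c1 G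
  exact ILC.wnC c2
end

section
/- There is no cut-free proof of the sequent !(X ⅋ X) ⊢ ?(X ⊗ X) in the sequent calculus ILC_ι; consequently ILC_ι does not enjoy cut-elimination. -/
set_option autoImplicit true

/-!
A cut-free proof of `!(X ⅋ X) ⊢ ?(X ⊗ X)` only contains subformulas of its end sequent, so its
sequents have antecedents among `!(X ⅋ X), X ⅋ X, X` and succedents among `?(X ⊗ X), X ⊗ X, X`.
Each such derivable sequent has exactly two top-level occurrences of `X`: the axiom `X ⊢ X` has
two, `⊗R` and `⅋L` join two such premises while absorbing one `X` from each, and the other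
applicable rules leave the atoms alone. The end sequent has none. With cut, however, it follows
from `!(X ⅋ X) ⊢ ?!X ⅋ ?!X`, derivable by `?!R`, and `!(X ⅋ X), ?!X ⊢ ?(X ⊗ X)`.
-/

open LF

def LF.isVar : LF → Bool
  | var _ => true
  | _ => false

def varCount (l : List LF) : ℕ := l.countP LF.isVar

theorem varCount_eq_two_of_cutFree {v : ℕ} {w : Bool} {Δ Γ : List LF}
    (h : ILC false w Δ Γ)
    (hΔ : Δ ⊆ [ofc (par (var v) (var v)), par (var v) (var v), var v])
    (hΓ : Γ ⊆ [wn (tensor (var v) (var v)), tensor (var v) (var v), var v]) :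
    varCount Δ + varCount Γ = 2 := by
  generalize hc : false = c at h
  induction h
  case cut => cases hc
  all_goals subst hc
  -- Rules whose principal formula lies outside the two lists are refuted here; what remains
  -- are the structural rules, dereliction, `id`, `tensorR` and `parL`.
  all_goals simp only [List.cons_subset, List.append_subset, List.nil_subset, List.mem_cons,
    List.not_mem_nil, reduceCtorEq, LF.ofc.injEq, LF.wn.injEq, LF.par.injEq, LF.tensor.injEq,
    or_false, false_or, and_true] at hΔ hΓ
  case id => rcases hΓ with rfl | rfl | rfl <;> simp_all [varCount, LF.isVar]
  all_goals simp_all [varCount, List.countP_cons, LF.isVar]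
  all_goals omega

theorem not_cutFree_ofc_par_proves_wn_tensor (v : ℕ) (w : Bool) :
    ¬ ILC false w [ofc (par (var v) (var v))] [wn (tensor (var v) (var v))] := fun h => by
  simpa [varCount, LF.isVar] using varCount_eq_two_of_cutFree (v := v) h (by simp) (by simp)

section Derivations

variable {c : Bool} (v : ℕ)

theorem ofc_par_ofc_var_proves_wn_tensor :
    ILC c true [ofc (par (var v) (var v)), ofc (var v)] [wn (tensor (var v) (var v))] := by
  have hX : ILC c true [ofc (par (var v) (var v)), var v] [var v] :=
    .xl (Δ := []) (Δ' := []) (.ocW (Δ := [var v]) .id)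
  have hXX : ILC c true [ofc (par (var v) (var v)), var v, var v] [wn (tensor (var v) (var v))] :=
    .wnD (Γ := []) (.tensorR (Γ₁ := []) (Γ₂ := []) hX .id)
  have hXoX : ILC c true [ofc (par (var v) (var v)), ofc (var v), var v]
      [wn (tensor (var v) (var v))] :=
    .xl (Δ := [_]) (Δ' := []) (.ocD (Δ := [_, _]) hXX)
  exact .ocC (Δ := [_]) (.ocD (Δ := [_, _]) hXoX)

theorem ofc_par_proves_par_wn_ofc :
    ILC c true [ofc (par (var v) (var v))] [par (wn (ofc (var v))) (wn (ofc (var v)))] := by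
  have hwX : ILC c true [var v] [wn (var v)] := .wnD (Γ := []) .id
  have hP : ILC c true [ofc (par (var v) (var v))] [wn (var v), wn (var v)] :=
    .ocD (Δ := []) (.parL (Δ₁ := []) (Δ₂ := []) hwX hwX)
  have hoX : ILC c true [ofc (par (var v) (var v))] [wn (var v), wn (ofc (var v))] :=
    .xr (Γ := []) (Γ' := []) (.wnocR (Δ := [_]) (Γ := [_]) hP)
  exact .parR (.wnocR (Δ := [_]) (Γ := [_]) hoX)

theorem ofc_par_proves_wn_tensor :
    ILC true true [ofc (par (var v) (var v))] [wn (tensor (var v) (var v))] := by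
  have hwoX := ILC.wnL (Δ := [_]) (Γ := [_]) (ofc_par_ofc_var_proves_wn_tensor (c := true) v)
  have hD := ILC.parL (Δ₁ := [_]) (Δ₂ := [_]) hwoX hwoX
  have hcut := ILC.cut (Δ' := [_, _]) (ofc_par_proves_par_wn_ofc v) hD
  exact .ocC (Δ := []) (.wnC (Γ := []) (.ocC (Δ := [_]) hcut))

end Derivations

/-- There is no cut-free proof of `!(X ⅋ X) ⊢ ?(X ⊗ X)` in ILC_ι; consequently
ILC_ι does not enjoy cut-elimination. -/
theorem ilc_iota_no_cut_elimination (X : ℕ) :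
    (¬ ILC false true [LF.ofc (LF.par (LF.var X) (LF.var X))]
        [LF.wn (LF.tensor (LF.var X) (LF.var X))]) ∧
    ¬ (∀ (Δ Γ : List LF), ILC true true Δ Γ → ILC false true Δ Γ) :=
  ⟨not_cutFree_ofc_par_proves_wn_tensor X true,
    fun hcutElim => not_cutFree_ofc_par_proves_wn_tensor X true
      (hcutElim _ _ (ofc_par_proves_wn_tensor X))⟩
end

section
/- For every proof p of a sequent Δ ⊢ Γ in LK there is a proof of the translated sequent T_?(Δ) ⊢ ?T_?(Γ) in INC, where the translation T_? on formulas is given by T_?(tt) = ?⊤, T_?(ff) = ff, T_?(A ∧ B) = ?T_?(A) & ?T_?(B), T_?(A ∨ B) = T_?(A) ∨ T_?(B), T_?(A ⇒ B) = T_?(A) ⇒ ?T_?(B), T_?(X) = X, and ?T_?(Γ) places ? on every formula of the translated list. -/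
set_option autoImplicit true

/-- Formulas of classical propositional logic CL. -/
inductive CLF : Type
  | var : ℕ → CLF
  | tt : CLF
  | ff : CLF
  | and : CLF → CLF → CLF
  | or : CLF → CLF → CLF
  | imp : CLF → CLF → CLF

/-- `LK c Δ Γ` : the sequent `Δ ⊢ Γ` is provable in the classical sequent
calculus LK; the flag `c` permits the Cut rule (`LK true` is full LK,
`LK false` is the cut-free fragment). -/
inductive LK : Bool → List CLF → List CLF → Prop
  | xl : LK c (Δ ++ A :: A' :: Δ') Γ → LK c (Δ ++ A' :: A :: Δ') Γ
  | xr : LK c Δ (Γ ++ B :: B' :: Γ') → LK c Δ (Γ ++ B' :: B :: Γ')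
  | wl : LK c Δ Γ → LK c (Δ ++ [A]) Γ
  | wr : LK c Δ Γ → LK c Δ (B :: Γ)
  | cl : LK c (Δ ++ [A, A]) Γ → LK c (Δ ++ [A]) Γ
  | cr : LK c Δ (B :: B :: Γ) → LK c Δ (B :: Γ)
  | id : LK c [A] [A]
  | cut : LK true Δ (B :: Γ) → LK true (Δ' ++ [B]) Γ' → LK true (Δ ++ Δ') (Γ ++ Γ')
  | ttL : LK c Δ Γ → LK c (Δ ++ [CLF.tt]) Γ
  | ttR : LK c [] [CLF.tt]
  | ffL : LK c [CLF.ff] []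
  | ffR : LK c Δ Γ → LK c Δ (CLF.ff :: Γ)
  | andL₁ : LK c (Δ ++ [A₁]) Γ → LK c (Δ ++ [CLF.and A₁ A₂]) Γ
  | andL₂ : LK c (Δ ++ [A₂]) Γ → LK c (Δ ++ [CLF.and A₁ A₂]) Γ
  | andR : LK c Δ (B₁ :: Γ) → LK c Δ (B₂ :: Γ) → LK c Δ (CLF.and B₁ B₂ :: Γ)
  | orL : LK c (Δ ++ [A₁]) Γ → LK c (Δ ++ [A₂]) Γ → LK c (Δ ++ [CLF.or A₁ A₂]) Γ
  | orR₁ : LK c Δ (B₁ :: Γ) → LK c Δ (CLF.or B₁ B₂ :: Γ)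
  | orR₂ : LK c Δ (B₂ :: Γ) → LK c Δ (CLF.or B₁ B₂ :: Γ)
  | impL : LK c Δ (A :: Γ) → LK c (Δ ++ [B]) Γ → LK c (Δ ++ [CLF.imp A B]) Γ
  | impR : LK c (Δ ++ [A]) (B :: Γ) → LK c Δ (CLF.imp A B :: Γ)
/-- Formulas of intuitionistic logic extended (IL^e). -/
inductive GF : Type
  | var : ℕ → GF
  | top : GF
  | ff : GF
  | withc : GF → GF → GF
  | or : GF → GF → GF
  | imp : GF → GF → GF
  | wn : GF → GF

/-- `INC c Δ Γ` : the sequent `Δ ⊢ Γ` is provable in the sequent calculus INC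
for IL^e; the flag `c` permits the cut rule Cut^?. -/
inductive INC : Bool → List GF → List GF → Prop
  | xl : INC c (Δ ++ A :: A' :: Δ') Γ → INC c (Δ ++ A' :: A :: Δ') Γ
  | xr : INC c Δ (Γ ++ B :: B' :: Γ') → INC c Δ (Γ ++ B' :: B :: Γ')
  | wl : INC c Δ Γ → INC c (Δ ++ [A]) Γ
  | wnW : INC c Δ Γ → INC c Δ (GF.wn B :: Γ)
  | cl : INC c (Δ ++ [A, A]) Γ → INC c (Δ ++ [A]) Γ
  | wnC : INC c Δ (GF.wn B :: GF.wn B :: Γ) → INC c Δ (GF.wn B :: Γ)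
  | wnD : INC c Δ (B :: Γ) → INC c Δ (GF.wn B :: Γ)
  | wnL : INC c (Δ ++ [A]) (List.map GF.wn Γ) → INC c (Δ ++ [GF.wn A]) (List.map GF.wn Γ)
  | id : INC c [A] [A]
  | cut : INC true Δ (GF.wn B :: List.map GF.wn Γ) → INC true (Δ' ++ [B]) (List.map GF.wn Γ') →
      INC true (Δ ++ Δ') (List.map GF.wn Γ ++ List.map GF.wn Γ')
  | topL : INC c Δ Γ → INC c (Δ ++ [GF.top]) Γ
  | topR : INC c [] [GF.top]
  | ffL : INC c [GF.ff] []
  | ffR : INC c Δ (List.map GF.wn Γ) → INC c Δ (GF.ff :: List.map GF.wn Γ)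
  | withL₁ : INC c (Δ ++ [A₁]) Γ → INC c (Δ ++ [GF.withc A₁ A₂]) Γ
  | withL₂ : INC c (Δ ++ [A₂]) Γ → INC c (Δ ++ [GF.withc A₁ A₂]) Γ
  | withR : INC c Δ (B₁ :: List.map GF.wn Γ) → INC c Δ (B₂ :: List.map GF.wn Γ) →
      INC c Δ (GF.withc B₁ B₂ :: List.map GF.wn Γ)
  | orL : INC c (Δ ++ [A₁]) Γ → INC c (Δ ++ [A₂]) Γ → INC c (Δ ++ [GF.or A₁ A₂]) Γ
  | orR₁ : INC c Δ (B₁ :: List.map GF.wn Γ) → INC c Δ (GF.or B₁ B₂ :: List.map GF.wn Γ)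
  | orR₂ : INC c Δ (B₂ :: List.map GF.wn Γ) → INC c Δ (GF.or B₁ B₂ :: List.map GF.wn Γ)
  | impL : INC c (Δ ++ [B]) Γ → INC c Θ (A :: List.map GF.wn Ξ) →
      INC c (Δ ++ Θ ++ [GF.imp A B]) (Γ ++ List.map GF.wn Ξ)
  | impR : INC c (Δ ++ [A]) (B :: List.map GF.wn Γ) → INC c Δ (GF.imp A B :: List.map GF.wn Γ)

/-- The translation T_? of classical formulas into IL^e-formulas. -/
def Twn : CLF → GF
  | CLF.var n => GF.var n
  | CLF.tt => GF.wn GF.top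
  | CLF.ff => GF.ff
  | CLF.and A B => GF.withc (GF.wn (Twn A)) (GF.wn (Twn B))
  | CLF.or A B => GF.or (Twn A) (Twn B)
  | CLF.imp A B => GF.imp (Twn A) (GF.wn (Twn B))

deriving instance DecidableEq for GF

/-- A helper tactic-style lemma: permutation on the right is admissible. -/
theorem INC.permR_aux {c : Bool} {Δ : List GF} {Γ Γ' : List GF} (p : Γ.Perm Γ') :
    ∀ Γ₀, INC c Δ (Γ₀ ++ Γ) → INC c Δ (Γ₀ ++ Γ') := by
  induction p with
  | nil => exact fun _ h => h
  | cons x _ ih =>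
      intro Γ₀ h
      have := ih (Γ₀ ++ [x]) (by simpa using h)
      simpa using this
  | swap x y l =>
      intro Γ₀ h
      exact INC.xr h
  | trans _ _ ih₁ ih₂ => exact fun Γ₀ h => ih₂ Γ₀ (ih₁ Γ₀ h)

theorem INC.permR {c : Bool} {Δ : List GF} {Γ Γ' : List GF} (p : Γ.Perm Γ')
    (h : INC c Δ Γ) : INC c Δ Γ' := by
  simpa using INC.permR_aux p [] h

theorem INC.permL_aux {c : Bool} {Γ : List GF} {Δ Δ' : List GF} (p : Δ.Perm Δ') :
    ∀ Δ₀, INC c (Δ₀ ++ Δ) Γ → INC c (Δ₀ ++ Δ') Γ := by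
  induction p with
  | nil => exact fun _ h => h
  | cons x _ ih =>
      intro Δ₀ h
      have := ih (Δ₀ ++ [x]) (by simpa using h)
      simpa using this
  | swap x y l =>
      intro Δ₀ h
      exact INC.xl h
  | trans _ _ ih₁ ih₂ => exact fun Δ₀ h => ih₂ Δ₀ (ih₁ Δ₀ h)

theorem INC.permL {c : Bool} {Γ : List GF} {Δ Δ' : List GF} (p : Δ.Perm Δ')
    (h : INC c Δ Γ) : INC c Δ' Γ := by
  simpa using INC.permL_aux p [] h

theorem gf_perm {l l' : List GF} (h : ∀ x, l.count x = l'.count x) : l.Perm l' :=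
  List.perm_iff_count.mpr h

/-- Contraction of a whole (?-ed) list on the right. -/
theorem INC.ctrR_list {c : Bool} {Δ : List GF} :
    ∀ (G Γ₀ : List GF), INC c Δ (Γ₀ ++ List.map GF.wn G ++ List.map GF.wn G) →
      INC c Δ (Γ₀ ++ List.map GF.wn G) := by
  intro G
  induction G with
  | nil => intro Γ₀ h; simpa using h
  | cons a G ih =>
      intro Γ₀ h
      have h1 : INC c Δ (GF.wn a :: GF.wn a :: (Γ₀ ++ (List.map GF.wn G ++ List.map GF.wn G))) := by
        refine INC.permR (gf_perm ?_) h
        intro x; simp [List.count_append, List.count_cons]; try ring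
      have h2 := INC.wnC (Γ := Γ₀ ++ (List.map GF.wn G ++ List.map GF.wn G)) h1
      have h3 : INC c Δ ((Γ₀ ++ [GF.wn a]) ++ List.map GF.wn G ++ List.map GF.wn G) := by
        refine INC.permR (gf_perm ?_) h2
        intro x; simp [List.count_append, List.count_cons]; try ring
      have h4 := ih (Γ₀ ++ [GF.wn a]) h3
      refine INC.permR (gf_perm ?_) h4
      intro x; simp [List.count_append, List.count_cons]; try ring

/-- Contraction of a whole list on the left. -/
theorem INC.ctrL_list {c : Bool} {Γ : List GF} :
    ∀ (D Δ₀ : List GF), INC c (Δ₀ ++ D ++ D) Γ → INC c (Δ₀ ++ D) Γ := by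
  intro D
  induction D with
  | nil => intro Δ₀ h; simpa using h
  | cons a D ih =>
      intro Δ₀ h
      have h1 : INC c ((Δ₀ ++ D ++ D) ++ [a, a]) Γ := by
        refine INC.permL (gf_perm ?_) h
        intro x; simp [List.count_append, List.count_cons]; try ring
      have h2 := INC.cl (Δ := Δ₀ ++ D ++ D) h1
      have h3 : INC c ((Δ₀ ++ [a]) ++ D ++ D) Γ := by
        refine INC.permL (gf_perm ?_) h2
        intro x; simp [List.count_append, List.count_cons]; try ring
      have h4 := ih (Δ₀ ++ [a]) h3
      refine INC.permL (gf_perm ?_) h4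
      intro x; simp [List.count_append, List.count_cons]; try ring

theorem map_f (Γ : List CLF) :
    (Γ.map fun A => GF.wn (Twn A)) = List.map GF.wn (Γ.map Twn) := by simp

theorem lk_to_inc_aux {c : Bool} {Δ Γ : List CLF} :
    LK c Δ Γ → INC true (Δ.map Twn) (Γ.map fun A => GF.wn (Twn A)) := by
  intro p
  induction p with
  | xl h ih =>
      simp only [List.map_append, List.map_cons, map_f] at ih ⊢
      exact INC.xl ih
  | xr h ih =>
      simp only [List.map_append, List.map_cons, map_f] at ih ⊢
      exact INC.xr ih
  | wl h ih =>
      simp only [List.map_append, List.map_cons, List.map_nil, map_f] at ih ⊢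
      exact INC.wl ih
  | wr h ih =>
      simp only [List.map_cons, map_f] at ih ⊢
      exact INC.wnW ih
  | cl h ih =>
      simp only [List.map_append, List.map_cons, List.map_nil, map_f] at ih ⊢
      exact INC.cl ih
  | cr h ih =>
      simp only [List.map_cons, map_f] at ih ⊢
      exact INC.wnC ih
  | id =>
      simp only [List.map_cons, List.map_nil, map_f]
      exact INC.wnD INC.id
  | cut h1 h2 ih1 ih2 =>
      simp only [List.map_append, List.map_cons, List.map_nil, map_f] at ih1 ih2 ⊢
      exact INC.cut ih1 ih2
  | ttL h ih =>
      simp only [List.map_append, List.map_cons, List.map_nil, map_f, Twn] at ih ⊢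
      exact INC.wnL (INC.topL ih)
  | ttR =>
      simp only [List.map_cons, List.map_nil, map_f, Twn]
      exact INC.wnD (INC.wnD INC.topR)
  | ffL =>
      simp only [List.map_cons, List.map_nil, map_f, Twn]
      exact INC.ffL
  | ffR h ih =>
      simp only [List.map_cons, map_f, Twn] at ih ⊢
      exact INC.wnD (INC.ffR ih)
  | andL₁ h ih =>
      simp only [List.map_append, List.map_cons, List.map_nil, map_f, Twn] at ih ⊢
      exact INC.withL₁ (INC.wnL ih)
  | andL₂ h ih =>
      simp only [List.map_append, List.map_cons, List.map_nil, map_f, Twn] at ih ⊢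
      exact INC.withL₂ (INC.wnL ih)
  | andR h1 h2 ih1 ih2 =>
      simp only [List.map_cons, map_f, Twn] at ih1 ih2 ⊢
      exact INC.wnD (INC.withR ih1 ih2)
  | orL h1 h2 ih1 ih2 =>
      simp only [List.map_append, List.map_cons, List.map_nil, map_f, Twn] at ih1 ih2 ⊢
      exact INC.orL ih1 ih2
  | @orR₁ _ _ B₁ Γ' B₂ h ih =>
      simp only [List.map_cons, map_f, Twn] at ih ⊢
      have d2 : INC true ([] ++ [Twn B₁]) (List.map GF.wn [GF.or (Twn B₁) (Twn B₂)]) := by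
        simpa using INC.wnD (INC.orR₁ (Γ := []) (by simpa using (INC.id (A := Twn B₁))))
      have d3 := INC.cut ih d2
      refine INC.permR (gf_perm ?_) (by simpa using d3)
      intro x; simp [List.count_append, List.count_cons]; try ring
  | @orR₂ _ _ B₂ Γ' B₁ h ih =>
      simp only [List.map_cons, map_f, Twn] at ih ⊢
      have d2 : INC true ([] ++ [Twn B₂]) (List.map GF.wn [GF.or (Twn B₁) (Twn B₂)]) := by
        simpa using INC.wnD (INC.orR₂ (Γ := []) (by simpa using (INC.id (A := Twn B₂))))
      have d3 := INC.cut ih d2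
      refine INC.permR (gf_perm ?_) (by simpa using d3)
      intro x; simp [List.count_append, List.count_cons]; try ring
  | @impL _ Δ' A Γ' B h1 h2 ih1 ih2 =>
      simp only [List.map_append, List.map_cons, List.map_nil, map_f, Twn] at ih1 ih2 ⊢
      have s1 := INC.wnL ih2
      have s2 := INC.impL (Θ := [Twn A]) (Ξ := []) s1 (by simpa using (INC.id (A := Twn A)))
      have s3 : INC true ((List.map Twn Δ' ++ [GF.imp (Twn A) (GF.wn (Twn B))]) ++ [Twn A])
          (List.map GF.wn (List.map Twn Γ')) := by
        refine INC.permL (gf_perm ?_) (by simpa using s2)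
        intro x; simp [List.count_append, List.count_cons]; try ring
      have s4 := INC.cut ih1 s3
      have s5 := INC.ctrR_list (Γ'.map Twn) [] (by simpa using s4)
      have s6 : INC true ([GF.imp (Twn A) (GF.wn (Twn B))] ++ List.map Twn Δ' ++ List.map Twn Δ')
          (List.map GF.wn (List.map Twn Γ')) := by
        refine INC.permL (gf_perm ?_) (by simpa using s5)
        intro x; simp [List.count_append, List.count_cons]; try ring
      have s7 := INC.ctrL_list (Δ'.map Twn) [GF.imp (Twn A) (GF.wn (Twn B))] s6
      refine INC.permL (gf_perm ?_) s7
      intro x; simp [List.count_append, List.count_cons]; try ring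
  | impR h ih =>
      simp only [List.map_append, List.map_cons, List.map_nil, map_f, Twn] at ih ⊢
      exact INC.wnD (INC.impR ih)

/-- For every proof of `Δ ⊢ Γ` in LK there is a proof of
`T_?(Δ) ⊢ ?T_?(Γ)` in INC. -/
theorem lk_to_inc (Δ Γ : List CLF) :
    LK true Δ Γ → INC true (Δ.map Twn) (Γ.map fun A => GF.wn (Twn A)) :=
  lk_to_inc_aux
end

section
/- The translation T_? of LK into INC is conservative: if Δ and Γ contain only formulas of classical logic CL and the sequent T_?(Δ) ⊢ ?T_?(Γ) is provable in INC, then Δ ⊢ Γ is provable in LK. -/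
set_option autoImplicit true

/-!
Erasing every `?` sends IL^e-formulas back to classical formulas and is a left inverse of
`T_?`. Under erasure every rule of INC becomes a rule of LK, or vanishes (dereliction and
`?`-left), so an INC derivation of `T_?(Δ) ⊢ ?T_?(Γ)` erases to an LK derivation of
`Δ ⊢ Γ`. The one rule that needs work is `⇒`-left: INC splits the contexts of its premises,
LK shares them, and weakening plus exchange bridge the gap.
-/

namespace GF

@[simp] def erase : GF → CLF
  | var n => CLF.var n
  | top => CLF.tt
  | ff => CLF.ff
  | withc A B => CLF.and A.erase B.erase
  | or A B => CLF.or A.erase B.erase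
  | imp A B => CLF.imp A.erase B.erase
  | wn A => A.erase

end GF

@[simp] lemma erase_Twn (A : CLF) : (Twn A).erase = A := by
  induction A <;> simp [Twn, *]

namespace LK

variable {c : Bool} {Δ Δ' Γ Γ' : List CLF}

lemma of_perm_left {l l' : List CLF} (p : l.Perm l') (pre : List CLF)
    (h : LK c (pre ++ l) Γ) : LK c (pre ++ l') Γ := by
  induction p generalizing pre with
  | nil => exact h
  | cons a _ ih => simpa using ih (pre ++ [a]) (by simpa using h)
  | swap => exact xl h
  | trans _ _ ih₁ ih₂ => exact ih₂ pre (ih₁ pre h)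

lemma of_perm_right {l l' : List CLF} (p : l.Perm l') (pre : List CLF)
    (h : LK c Δ (pre ++ l)) : LK c Δ (pre ++ l') := by
  induction p generalizing pre with
  | nil => exact h
  | cons a _ ih => simpa using ih (pre ++ [a]) (by simpa using h)
  | swap => exact xr h
  | trans _ _ ih₁ ih₂ => exact ih₂ pre (ih₁ pre h)

lemma weaken_left_append (Θ : List CLF) (h : LK c Δ Γ) : LK c (Δ ++ Θ) Γ := by
  induction Θ using List.reverseRecOn with
  | nil => simpa using h
  | append_singleton Θ A ih => simpa using wl (A := A) ih

lemma weaken_right_append (Θ : List CLF) (h : LK c Δ Γ) : LK c Δ (Θ ++ Γ) := by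
  induction Θ with
  | nil => simpa using h
  | cons B Θ ih => exact wr ih

lemma of_subperm (hΔ : Δ.Subperm Δ') (hΓ : Γ.Subperm Γ') (h : LK c Δ Γ) : LK c Δ' Γ' := by
  obtain ⟨l, hlΔ, hlΔ'⟩ := hΔ
  obtain ⟨r, hΔ'⟩ := hlΔ'.exists_perm_append
  obtain ⟨m, hmΓ, hmΓ'⟩ := hΓ
  obtain ⟨s, hΓ'⟩ := hmΓ'.exists_perm_append
  have hleft : LK c Δ' Γ := by
    simpa using of_perm_left ((hlΔ.append_right r).symm.trans hΔ'.symm) []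
      (by simpa using weaken_left_append r h)
  simpa using of_perm_right
    ((List.perm_append_comm.trans (hmΓ.append_right s).symm).trans hΓ'.symm) []
    (by simpa using weaken_right_append s hleft)

lemma impL_split {A B : CLF} {Θ Ξ : List CLF} (h₁ : LK c (Δ ++ [B]) Γ)
    (h₂ : LK c Θ (A :: Ξ)) : LK c (Δ ++ Θ ++ [CLF.imp A B]) (Γ ++ Ξ) := by
  refine impL (of_subperm ?_ ?_ h₂) (of_subperm ?_ ?_ h₁)
  · exact (List.sublist_append_right Δ Θ).subperm
  · exact (List.subperm_cons A).2 (List.sublist_append_right Γ Ξ).subperm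
  · simpa using (List.subperm_append_left Δ).2 (List.sublist_append_right Θ [B]).subperm
  · exact (List.sublist_append_left Γ Ξ).subperm

end LK

theorem LK.of_INC_erase {c : Bool} {Δ Γ : List GF} (h : INC c Δ Γ) :
    LK c (Δ.map GF.erase) (Γ.map GF.erase) := by
  induction h with
  | xl _ ih => simpa using LK.xl (by simpa using ih)
  | xr _ ih => simpa using LK.xr (by simpa using ih)
  | wl _ ih => simpa using LK.wl ih
  | wnW _ ih => simpa using LK.wr ih
  | cl _ ih => simpa using LK.cl (by simpa using ih)
  | wnC _ ih => simpa using LK.cr (by simpa using ih)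
  | wnD _ ih => simpa using ih
  | wnL _ ih => simpa using ih
  | id => exact LK.id
  | cut _ _ ih₁ ih₂ => simpa using LK.cut (by simpa using ih₁) (by simpa using ih₂)
  | topL _ ih => simpa using LK.ttL ih
  | topR => exact LK.ttR
  | ffL => exact LK.ffL
  | ffR _ ih => simpa using LK.ffR (by simpa using ih)
  | withL₁ _ ih => simpa using LK.andL₁ (by simpa using ih)
  | withL₂ _ ih => simpa using LK.andL₂ (by simpa using ih)
  | withR _ _ ih₁ ih₂ => simpa using LK.andR (by simpa using ih₁) (by simpa using ih₂)
  | orL _ _ ih₁ ih₂ => simpa using LK.orL (by simpa using ih₁) (by simpa using ih₂)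
  | orR₁ _ ih => simpa using LK.orR₁ (by simpa using ih)
  | orR₂ _ ih => simpa using LK.orR₂ (by simpa using ih)
  | impL _ _ ih₁ ih₂ => simpa using LK.impL_split (by simpa using ih₁) (by simpa using ih₂)
  | impR _ ih => simpa using LK.impR (by simpa using ih)

/-- The translation T_? of LK into INC is conservative: if
`T_?(Δ) ⊢ ?T_?(Γ)` is provable in INC, then `Δ ⊢ Γ` is provable in LK. -/
theorem inc_conservative_over_lk (Δ Γ : List CLF) :
    INC true (Δ.map Twn) (Γ.map fun A => GF.wn (Twn A)) → LK true Δ Γ := by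
  intro h
  simpa [Function.comp_def] using LK.of_INC_erase h
end

section
/- For every proof p of a sequent Δ ⊢ Γ in CLC there is a proof of the sequent T_?(Δ) ⊢ ?T_?(Γ) in ILC_ι, where the translation T_? on formulas of CLL⁻ is given by T_?(tt) = ?⊤, T_?(⊥) = ⊥, T_?(A ∧ B) = ?T_?(A) & ?T_?(B), T_?(A ⊕ B) = T_?(A) ⊕ T_?(B), T_?(A ↬ B) = T_?(A) ⊸ ?T_?(B) (with A ⊸ B := ¬A ⅋ B), T_?(!A) = !T_?(A), and T_?(X) = X. -/
set_option autoImplicit true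

/-- Formulas of classical linear logic negative (CLL⁻). -/
inductive HF : Type
  | var : ℕ → HF
  | tt : HF
  | bot : HF
  | and : HF → HF → HF
  | plus : HF → HF → HF
  | cli : HF → HF → HF
  | ofc : HF → HF

/-- `CLC c Δ Γ` : the sequent `Δ ⊢ Γ` is provable in the sequent calculus CLC
for CLL⁻; the flag `c` permits the cut rule Cut^!. -/
inductive CLC : Bool → List HF → List HF → Prop
  | xl : CLC c (Δ ++ A :: A' :: Δ') Γ → CLC c (Δ ++ A' :: A :: Δ') Γ
  | xr : CLC c Δ (Γ ++ B :: B' :: Γ') → CLC c Δ (Γ ++ B' :: B :: Γ')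
  | ocW : CLC c Δ Γ → CLC c (Δ ++ [HF.ofc A]) Γ
  | wr : CLC c Δ Γ → CLC c Δ (B :: Γ)
  | ocC : CLC c (Δ ++ [HF.ofc A, HF.ofc A]) Γ → CLC c (Δ ++ [HF.ofc A]) Γ
  | cr : CLC c Δ (B :: B :: Γ) → CLC c Δ (B :: Γ)
  | ocD : CLC c (List.map HF.ofc Δ ++ [A]) Γ → CLC c (List.map HF.ofc Δ ++ [HF.ofc A]) Γ
  | ocR : CLC c (List.map HF.ofc Δ) (B :: Γ) → CLC c (List.map HF.ofc Δ) (HF.ofc B :: Γ)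
  | id : CLC c [A] [A]
  | cut : CLC true (List.map HF.ofc Δ) (B :: Γ) → CLC true (List.map HF.ofc Δ' ++ [HF.ofc B]) Γ' →
      CLC true (List.map HF.ofc Δ ++ List.map HF.ofc Δ') (Γ ++ Γ')
  | ttL : CLC c (List.map HF.ofc Δ) Γ → CLC c (List.map HF.ofc Δ ++ [HF.tt]) Γ
  | ttR : CLC c [] [HF.tt]
  | botL : CLC c [HF.bot] []
  | botR : CLC c Δ Γ → CLC c Δ (HF.bot :: Γ)
  | andL₁ : CLC c (List.map HF.ofc Δ ++ [A₁]) Γ → CLC c (List.map HF.ofc Δ ++ [HF.and A₁ A₂]) Γ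
  | andL₂ : CLC c (List.map HF.ofc Δ ++ [A₂]) Γ → CLC c (List.map HF.ofc Δ ++ [HF.and A₁ A₂]) Γ
  | andR : CLC c Δ (B₁ :: Γ) → CLC c Δ (B₂ :: Γ) → CLC c Δ (HF.and B₁ B₂ :: Γ)
  | plusL : CLC c (List.map HF.ofc Δ ++ [A₁]) Γ → CLC c (List.map HF.ofc Δ ++ [A₂]) Γ →
      CLC c (List.map HF.ofc Δ ++ [HF.plus A₁ A₂]) Γ
  | plusR₁ : CLC c Δ (B₁ :: Γ) → CLC c Δ (HF.plus B₁ B₂ :: Γ)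
  | plusR₂ : CLC c Δ (B₂ :: Γ) → CLC c Δ (HF.plus B₁ B₂ :: Γ)
  | cliL : CLC c (List.map HF.ofc Δ ++ [B]) Γ → CLC c Θ (A :: Ξ) →
      CLC c (List.map HF.ofc Δ ++ Θ ++ [HF.ofc (HF.cli A B)]) (Γ ++ Ξ)
  | cliR : CLC c (List.map HF.ofc Δ ++ [A]) (B :: Γ) → CLC c (List.map HF.ofc Δ) (HF.cli A B :: Γ)
/-- The translation T_? of CLL⁻-formulas into ILL^e-formulas, with
`A ⊸ B := ¬A ⅋ B`. -/
def Tq : HF → LF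
  | HF.var n => LF.var n
  | HF.tt => LF.wn LF.top
  | HF.bot => LF.bot
  | HF.and A B => LF.withc (LF.wn (Tq A)) (LF.wn (Tq B))
  | HF.plus A B => LF.plus (Tq A) (Tq B)
  | HF.cli A B => LF.par (LF.neg (Tq A)) (LF.wn (Tq B))
  | HF.ofc A => LF.ofc (Tq A)

section Helpers
variable {c w : Bool}

theorem ilc_permR {Γ Γ₂ : List LF} (p : Γ.Perm Γ₂) :
    ∀ (Γ₀ Δ : List LF), ILC c w Δ (Γ₀ ++ Γ) → ILC c w Δ (Γ₀ ++ Γ₂) := by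
  induction p with
  | nil => exact fun _ _ h => h
  | cons x _ ih =>
      intro Γ₀ Δ h
      have := ih (Γ₀ ++ [x]) Δ (by simpa using h)
      simpa using this
  | swap x y l =>
      intro Γ₀ Δ h
      exact ILC.xr h
  | trans _ _ ih₁ ih₂ => exact fun Γ₀ Δ h => ih₂ _ _ (ih₁ _ _ h)

theorem ilc_permL {Δ Δ₂ : List LF} (p : Δ.Perm Δ₂) :
    ∀ (Δ₀ Γ : List LF), ILC c w (Δ₀ ++ Δ) Γ → ILC c w (Δ₀ ++ Δ₂) Γ := by
  induction p with
  | nil => exact fun _ _ h => h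
  | cons x _ ih =>
      intro Δ₀ Γ h
      have := ih (Δ₀ ++ [x]) Γ (by simpa using h)
      simpa using this
  | swap x y l =>
      intro Δ₀ Γ h
      exact ILC.xl h
  | trans _ _ ih₁ ih₂ => exact fun Δ₀ Γ h => ih₂ _ _ (ih₁ _ _ h)

theorem ilc_permR' {Γ Γ₂ Δ : List LF} (p : Γ.Perm Γ₂) (h : ILC c w Δ Γ) :
    ILC c w Δ Γ₂ := ilc_permR p [] Δ h

theorem ilc_permL' {Δ Δ₂ Γ : List LF} (p : Δ.Perm Δ₂) (h : ILC c w Δ Γ) :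
    ILC c w Δ₂ Γ := ilc_permL p [] Γ h

theorem wn_mono {A B : LF} {Δ Γ : List LF} (h1 : ILC true true [A] [LF.wn B])
    (h2 : ILC true true Δ (LF.wn A :: Γ)) : ILC true true Δ (LF.wn B :: Γ) := by
  have hL : ILC true true [LF.wn A] [LF.wn B] := by
    have := ILC.wnL (c := true) (w := true) (Δ := []) (Γ := [B]) (A := A) (by simpa using h1)
    simpa using this
  have hc := ILC.cut (Δ' := []) (Γ' := [LF.wn B]) h2 hL
  refine ilc_permR' ?_ (by simpa using hc)
  simpa using (List.perm_append_comm (l₁ := Γ) (l₂ := [LF.wn B]))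

theorem cli_key {A B : LF} :
    ILC c true [LF.ofc (LF.par (LF.neg A) (LF.wn B)), LF.wn A] [LF.wn B] := by
  have h1 : ILC c true ([A] ++ [LF.neg A]) [] := ILC.negL ILC.id
  have h2 : ILC c true [LF.wn B] [LF.wn B] := ILC.id
  have h3 := ILC.parL (Δ₂ := []) h1 (by simpa using h2)
  -- h3 : [A] ++ [] ++ [par (neg A) (wn B)] ⊢ [] ++ [wn B]
  have h4 : ILC c true ([A] ++ [LF.ofc (LF.par (LF.neg A) (LF.wn B))]) [LF.wn B] :=
    ILC.ocD (by simpa using h3)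
  have h5 : ILC c true ([] ++ [LF.ofc (LF.par (LF.neg A) (LF.wn B))] ++ [A]) [LF.wn B] :=
    ILC.xl (Δ := []) (by simpa using h4)
  have := ILC.wnL (Δ := [LF.par (LF.neg A) (LF.wn B)]) (Γ := [B]) (A := A) (by simpa using h5)
  simpa using this

end Helpers

theorem Tq_ofc_map (Δ : List HF) :
    List.map Tq (List.map HF.ofc Δ) = List.map LF.ofc (List.map Tq Δ) := by
  induction Δ with
  | nil => rfl
  | cons a l ih => simp [Tq, ih]

theorem W_map (Γ : List HF) :
    List.map (fun A => LF.wn (Tq A)) Γ = List.map LF.wn (List.map Tq Γ) := by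
  simp [List.map_map]

theorem clc_aux : ∀ {c : Bool} {Δ Γ : List HF}, CLC c Δ Γ →
    ILC true true (Δ.map Tq) (Γ.map fun A => LF.wn (Tq A)) := by
  intro c Δ Γ h
  induction h with
  | xl h ih =>
      simp only [List.map_append, List.map_cons] at ih ⊢
      exact ILC.xl ih
  | xr h ih =>
      simp only [List.map_append, List.map_cons] at ih ⊢
      exact ILC.xr ih
  | ocW h ih =>
      simp only [List.map_append, List.map_cons, List.map_nil, Tq] at ih ⊢
      exact ILC.ocW ih
  | wr h ih =>
      simp only [List.map_cons] at ih ⊢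
      exact ILC.wnW ih
  | ocC h ih =>
      simp only [List.map_append, List.map_cons, List.map_nil, Tq] at ih ⊢
      exact ILC.ocC ih
  | cr h ih =>
      simp only [List.map_cons] at ih ⊢
      exact ILC.wnC ih
  | ocD h ih =>
      simp only [List.map_append, List.map_cons, List.map_nil, Tq_ofc_map, Tq] at ih ⊢
      exact ILC.ocD ih
  | ocR h ih =>
      simp only [List.map_cons, Tq_ofc_map, W_map, Tq] at ih ⊢
      exact ILC.wnocR ih
  | id => exact ILC.wnD ILC.id
  | cut h1 h2 ih1 ih2 =>
      simp only [List.map_append, List.map_cons, List.map_nil, Tq_ofc_map, W_map, Tq]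
        at ih1 ih2 ⊢
      exact ILC.cut (ILC.ocR ih1) (ILC.ocwnL ih2)
  | ttL h ih =>
      simp only [List.map_append, List.map_cons, List.map_nil, Tq_ofc_map, W_map, Tq] at ih ⊢
      exact ILC.wnL (ILC.topL ih)
  | ttR =>
      simp only [List.map_cons, List.map_nil, Tq]
      exact ILC.wnD (ILC.wnD ILC.topR)
  | botL =>
      simp only [List.map_cons, List.map_nil, Tq]
      exact ILC.botL
  | botR h ih =>
      simp only [List.map_cons, Tq] at ih ⊢
      exact ILC.wnD (ILC.botR ih)
  | andL₁ h ih =>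
      simp only [List.map_append, List.map_cons, List.map_nil, Tq_ofc_map, W_map, Tq] at ih ⊢
      exact ILC.withL₁ (ILC.wnL ih)
  | andL₂ h ih =>
      simp only [List.map_append, List.map_cons, List.map_nil, Tq_ofc_map, W_map, Tq] at ih ⊢
      exact ILC.withL₂ (ILC.wnL ih)
  | andR h1 h2 ih1 ih2 =>
      simp only [List.map_cons, Tq] at ih1 ih2 ⊢
      exact ILC.wnD (ILC.withR ih1 ih2)
  | plusL h1 h2 ih1 ih2 =>
      simp only [List.map_append, List.map_cons, List.map_nil, Tq_ofc_map, Tq] at ih1 ih2 ⊢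
      exact ILC.plusL ih1 ih2
  | plusR₁ h ih =>
      simp only [List.map_cons, Tq] at ih ⊢
      exact wn_mono (ILC.wnD (ILC.plusR₁ ILC.id)) ih
  | plusR₂ h ih =>
      simp only [List.map_cons, Tq] at ih ⊢
      exact wn_mono (ILC.wnD (ILC.plusR₂ ILC.id)) ih
  | cliL h1 h2 ih1 ih2 =>
      rename_i c Δ B Γ Θ A Ξ
      simp only [List.map_append, List.map_cons, List.map_nil, Tq_ofc_map, W_map, Tq]
        at ih1 ih2 ⊢
      have hL := ILC.wnL ih1
      have s1 := ILC.cut (Δ' := [LF.ofc (LF.par (LF.neg (Tq A)) (LF.wn (Tq B)))])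
        (Γ' := [LF.wn (Tq B)]) ih2 cli_key
      have s2 := ilc_permR' (List.perm_append_comm) s1
      have s3 := ILC.cut s2 hL
      have s4 := ilc_permR' (List.perm_append_comm) s3
      have p := List.perm_append_comm
        (l₁ := List.map Tq Θ ++ [LF.ofc (LF.par (LF.neg (Tq A)) (LF.wn (Tq B)))])
        (l₂ := List.map LF.ofc (List.map Tq Δ))
      rw [← List.append_assoc] at p
      exact ilc_permL' p (by simpa using s4)
  | cliR h ih =>
      simp only [List.map_append, List.map_cons, List.map_nil, Tq_ofc_map, W_map, Tq] at ih ⊢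
      exact ILC.wnD (ILC.parR (ILC.negR ih))

/-- For every proof of `Δ ⊢ Γ` in CLC there is a proof of
`T_?(Δ) ⊢ ?T_?(Γ)` in ILC_ι. -/
theorem clc_to_ilc_iota (Δ Γ : List HF) :
    CLC true Δ Γ →
    ILC true true (Δ.map Tq) (Γ.map fun A => LF.wn (Tq A)) := by
  exact clc_aux
end
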